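/- Fix ε > 0, 0 < δ₁ ≤ 1/2, and 0 < δ₂ ≤ 1. Suppose μ is a probability measure on S^{n−1} satisfying the ACW(θ, α) condition, x ∈ ℝⁿ is nonzero, and x₀ satisfies ‖x₀ − x‖₂ ≤ √δ₁·sin(θ)·‖x‖₂. Let X_k denote the k-th iterate of the generalized randomized Kaczmarz method with respect to μ started from x₀. Then with probability at least 1 − δ₁ − δ₂: if k ≥ (log(2/ε) + log(1/δ₂))·n/α, then ‖X_k − x‖₂² ≤ ε‖x₀ − x‖₂². -/

import Mathlib

open MeasureTheory ProbabilityTheory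
open scoped RealInnerProductSpace ENNReal BigOperators

noncomputable section

/-- `ℝⁿ` with the Euclidean structure. -/
abbrev Euc (n : ℕ) := EuclideanSpace ℝ (Fin n)

/-- The sign function used in the paper: `sgn t = 1` if `t ≥ 0` and `-1` otherwise. -/
def sgn (t : ℝ) : ℝ := if 0 ≤ t then 1 else -1

/-- One (generalized) Kaczmarz step for phase retrieval with signal `x`,
measurement vector `a`, applied to the current iterate `z`:
`Pz = z + (sign(⟨a,z⟩)·|⟨a,x⟩| − ⟨a,z⟩) a`. -/
def kacStep {n : ℕ} (x a z : Euc n) : Euc n :=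
  z + (sgn ⟪a, z⟫ * |⟪a, x⟫| - ⟪a, z⟫) • a

/-- The randomized Kaczmarz iterates `X_k = P_k ⋯ P_1 x₀`, where step `k+1`
uses the measurement vector `a k`. -/
def kacIter {n : ℕ} (x : Euc n) (a : ℕ → Euc n) (x0 : Euc n) : ℕ → Euc n
  | 0 => x0
  | k + 1 => kacStep x (a k) (kacIter x a x0 k)

/-- The spherical wedge `W_{x,z}`: points of the unit sphere where the signs of
`⟨v,x⟩` and `⟨v,z⟩` disagree. -/
def wedge {n : ℕ} (x z : Euc n) : Set (Euc n) :=
  {v | v ∈ Metric.sphere (0 : Euc n) 1 ∧ sgn ⟪v, x⟫ ≠ sgn ⟪v, z⟫}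

/-- The matrix `E_{a∼μ}[a aᵀ]`. -/
def covMat {n : ℕ} (μ : Measure (Euc n)) : Matrix (Fin n) (Fin n) ℝ :=
  Matrix.of fun i j => ∫ a, a i * a j ∂μ

/-- The matrix `E_{a∼μ}[a aᵀ 1_W(a)]`. -/
def covMatOn {n : ℕ} (μ : Measure (Euc n)) (W : Set (Euc n)) : Matrix (Fin n) (Fin n) ℝ :=
  Matrix.of fun i j => ∫ a in W, a i * a j ∂μ

/-- The quadratic form `vᵀ M v` of a matrix. -/
def quadForm {n : ℕ} (M : Matrix (Fin n) (Fin n) ℝ) (v : Euc n) : ℝ :=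
  ∑ i, ∑ j, v i * M i j * v j

/-- The smallest eigenvalue of a symmetric matrix, via the Rayleigh quotient
characterization `λ_min(M) = inf_{‖v‖=1} vᵀMv`. -/
def lamMin {n : ℕ} (M : Matrix (Fin n) (Fin n) ℝ) : ℝ :=
  ⨅ v : {v : Euc n // ‖v‖ = 1}, quadForm M (v : Euc n)

/-- The largest eigenvalue of a symmetric matrix, via the Rayleigh quotient
characterization `λ_max(M) = sup_{‖v‖=1} vᵀMv`. -/
def lamMax {n : ℕ} (M : Matrix (Fin n) (Fin n) ℝ) : ℝ :=
  ⨆ v : {v : Euc n // ‖v‖ = 1}, quadForm M (v : Euc n)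

/-- The uniform probability measure on the unit sphere `S^{n-1} ⊂ ℝⁿ`:
the normalized `(n-1)`-dimensional Hausdorff measure on the sphere. -/
def sphereUniform (n : ℕ) : Measure (Euc n) :=
  (μH[(n : ℝ) - 1] (Metric.sphere (0 : Euc n) 1))⁻¹ •
    (μH[(n : ℝ) - 1]).restrict (Metric.sphere (0 : Euc n) 1)

/-- The `ACW(θ, α)` (anti-concentration on wedges) condition: for every wedge `W`
of angle less than `θ`, `λ_min(E[aaᵀ] − 4 E[aaᵀ 1_W(a)]) ≥ α/n`. -/
def ACW {n : ℕ} (μ : Measure (Euc n)) (θ α : ℝ) : Prop :=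
  ∀ x z : Euc n, x ≠ 0 → z ≠ 0 → InnerProductGeometry.angle x z < θ →
    lamMin (covMat μ - (4 : ℝ) • covMatOn μ (wedge x z)) ≥ α / n

/-- The hitting time `τ = min{k : X_k ∉ B}` (equal to `⊤ = ∞` if the trajectory
never leaves `B`). -/
def hitTime {n : ℕ} (B : Set (Euc n)) (X : ℕ → Euc n) : ℕ∞ :=
  ⨅ j ∈ {j : ℕ | X j ∉ B}, (j : ℕ∞)

/-- The stopped iterate `X_{τ ∧ k}` where `τ = hitTime B`. -/
def stoppedIter {n : ℕ} (x : Euc n) (a : ℕ → Euc n) (x0 : Euc n) (B : Set (Euc n)) (k : ℕ) :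
    Euc n :=
  kacIter x a x0 (min (hitTime B (kacIter x a x0)) (k : ℕ∞)).toNat

/-- The filtration `(F_k)` where `F_k = σ(a_0, …, a_{k-1})` is generated by the
first `k` measurement vectors. -/
def measFiltration {Ω : Type*} {mΩ : MeasurableSpace Ω} {n : ℕ}
    (A : ℕ → Ω → Euc n) (hA : ∀ i, Measurable (A i)) : Filtration ℕ mΩ where
  seq k := ⨆ j ∈ Set.Iio k, MeasurableSpace.comap (A j) inferInstance
  mono' _ _ hij := biSup_mono fun _ ha => lt_of_lt_of_le ha hij
  le' _ := iSup₂_le fun j _ => measurable_iff_comap_le.mp (hA j)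

/-- The set `S_τ` of `{0,1}`-vectors of length `m` with at most `τ·m` ones. -/
def selVecs (m : ℕ) (τ : ℝ) : Set (Fin m → ℝ) :=
  {s | (∀ i, s i = 0 ∨ s i = 1) ∧ ∑ i, s i ≤ τ * m}

/-- The Euclidean unit ball `B₂ⁿ ⊂ ℝⁿ`. -/
def unitBall (n : ℕ) : Set (Euc n) :=
  {v | ‖v‖ ≤ 1}

/-- A process `(Y_t)_{t ∈ T}` has *mixed tail increments* with respect to a pair of
metrics `(d₁, d₂)`: there are constants `c, C > 0` with
`P(|Y_s − Y_t| ≥ c(√u d₂(s,t) + u d₁(s,t))) ≤ C e^{−u}` for all `s,t,u`. -/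
def HasMixedTailIncrements {Ω T : Type*} [MeasurableSpace Ω] (P : Measure Ω)
    (Y : T → Ω → ℝ) (d₁ d₂ : T → T → ℝ) : Prop :=
  ∃ c C : ℝ, 0 < c ∧ 0 < C ∧ ∀ s t : T, ∀ u : ℝ, 0 < u →
    P {ω | c * (Real.sqrt u * d₂ s t + u * d₁ s t) ≤ |Y s ω - Y t ω|} ≤
      ENNReal.ofReal (C * Real.exp (-u))

/-- An admissible sequence of subsets: `|T₀| = 1` and `|T_k| ≤ 2^(2^k)` for `k ≥ 1`
(the sets are taken nonempty so that distances to them are meaningful). -/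
def Admissible {T : Type*} (Ts : ℕ → Finset T) : Prop :=
  (Ts 0).card = 1 ∧ (∀ k, 1 ≤ k → (Ts k).card ≤ 2 ^ 2 ^ k) ∧ ∀ k, (Ts k).Nonempty

/-- The distance from a point to a finite set, for an abstract metric `d`. -/
def distToFinset {T : Type*} (d : T → T → ℝ) (t : T) (S : Finset T) : ℝ :=
  sInf ((fun u => d t u) '' (S : Set T))

/-- Talagrand's `γ_α` functional of a metric space `(T, d)` (here `T` is a type and
`d` an abstract metric on it): `γ_α(T,d) = inf_{(T_k)} sup_t Σ_k 2^{k/α} d(t, T_k)`,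
the infimum being over admissible sequences. -/
def gammaFunctional {T : Type*} (α : ℝ) (d : T → T → ℝ) : ℝ :=
  ⨅ Ts : {Ts : ℕ → Finset T // Admissible Ts},
    ⨆ t : T, ∑' k : ℕ, (2 : ℝ) ^ ((k : ℝ) / α) * distToFinset d t ((Ts : ℕ → Finset T) k)

end

/-!
Put `q = α / n` and `G = B(x, sin θ ‖x‖)`. Every point of `G` makes an angle less than `θ`
with `x`, so for `z ∈ G` the ACW condition gives `E ‖P z - x‖² ≤ (1 - q) ‖z - x‖²`: a step
removes the component `⟪a, z - x⟫²` of the error and, on the wedge where the sign is guessed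
wrong, adds back at most `4 ⟪a, z - x⟫²`.

Run the iteration stopped on leaving `G` and, from step `K = ⌈log (2 / (ε δ₂)) / q⌉` on, also
at the first squared error above `ε ‖x₀ - x‖²`. The expected squared error of the stopped chain
never increases, and its part inside `G` shrinks by the factor `1 - q` per step up to time `K`,
to at most `ε δ₂ / 2 · ‖x₀ - x‖²`. A stopped chain keeps its final value, so each way of
failing makes the stopped error exceed a fixed level at all large times, and Markov's inequality
at single times bounds its probability: leaving `G` by `‖x₀ - x‖² / (sin θ ‖x‖)² ≤ δ₁`, a late
large error by `δ₂ / 2`.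
-/

open Filter InnerProductGeometry

lemma sgn_mul_abs (t : ℝ) : sgn t * |t| = t := by
  unfold sgn
  split_ifs with h
  · rw [abs_of_nonneg h, one_mul]
  · rw [abs_of_neg (not_le.mp h), neg_one_mul, neg_neg]

lemma sgn_mul_abs_of_sgn_ne {s t : ℝ} (h : sgn s ≠ sgn t) : sgn s * |t| = -t ∧ s * t ≤ 0 := by
  unfold sgn at *
  split_ifs at * with hs ht <;> first
    | exact absurd rfl h
    | constructor <;> cases abs_cases t <;> nlinarith

lemma norm_kacStep_sub_sq {n : ℕ} (x a z : Euc n) (ha : ‖a‖ = 1) :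
    ‖kacStep x a z - x‖ ^ 2 = ‖z - x‖ ^ 2
      + 2 * (sgn ⟪a, z⟫ * |⟪a, x⟫| - ⟪a, z⟫) * ⟪a, z - x⟫
      + (sgn ⟪a, z⟫ * |⟪a, x⟫| - ⟪a, z⟫) ^ 2 := by
  have hdiff : kacStep x a z - x = (z - x) + (sgn ⟪a, z⟫ * |⟪a, x⟫| - ⟪a, z⟫) • a := by
    simp only [kacStep]; abel
  rw [hdiff, norm_add_sq_real, real_inner_smul_right, norm_smul, real_inner_comm a (z - x), ha,
    Real.norm_eq_abs, mul_one, sq_abs]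
  ring

lemma norm_kacStep_sub_sq_le {n : ℕ} (x a z : Euc n) (ha : ‖a‖ = 1) :
    ‖kacStep x a z - x‖ ^ 2 ≤ ‖z - x‖ ^ 2 - ⟪a, z - x⟫ ^ 2
      + (wedge x z).indicator (fun b => 4 * ⟪b, z - x⟫ ^ 2) a := by
  rw [norm_kacStep_sub_sq x a z ha, inner_sub_right]
  by_cases hw : a ∈ wedge x z
  · obtain ⟨hsgn, hst⟩ := sgn_mul_abs_of_sgn_ne (Ne.symm hw.2)
    rw [Set.indicator_of_mem hw, hsgn, inner_sub_right]
    nlinarith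
  · have hsgn : sgn ⟪a, x⟫ = sgn ⟪a, z⟫ := by
      by_contra h
      exact hw ⟨by simpa using ha, h⟩
    rw [Set.indicator_of_notMem hw, ← hsgn, sgn_mul_abs]
    exact le_of_eq (by ring)

lemma kacIter_self {n : ℕ} (x : Euc n) (a : ℕ → Euc n) (k : ℕ) : kacIter x a x k = x := by
  induction k with
  | zero => rfl
  | succ k ih => simp only [kacIter, ih, kacStep, sgn_mul_abs, sub_self, zero_smul, add_zero]

lemma angle_lt_of_norm_sub_lt {V : Type*} [NormedAddCommGroup V] [InnerProductSpace ℝ V]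
    {x z : V} {θ : ℝ} (hθ : 0 < θ) (hθ' : θ < Real.pi / 2) (hz : ‖z - x‖ < Real.sin θ * ‖x‖) :
    z ≠ 0 ∧ angle x z < θ := by
  have hsin : Real.sin θ < 1 := by
    rw [← Real.sin_pi_div_two]
    exact Real.sin_lt_sin_of_lt_of_le_pi_div_two (by linarith) le_rfl hθ'
  have hcos : 0 < Real.cos θ := Real.cos_pos_of_mem_Ioo ⟨by linarith, hθ'⟩
  have hx : 0 < ‖x‖ := pos_of_mul_pos_right ((norm_nonneg _).trans_lt hz)
    (Real.sin_nonneg_of_nonneg_of_le_pi hθ.le (by linarith [Real.pi_pos]))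
  have hz0 : z ≠ 0 := by
    rintro rfl
    rw [zero_sub, norm_neg] at hz
    nlinarith
  refine ⟨hz0, not_le.mp fun hle => ?_⟩
  -- by AM-GM, `‖z - x‖² < sin² θ ‖x‖²` forces `cos θ ‖x‖ ‖z‖ < ⟪x, z⟫ = cos (angle x z) ‖x‖ ‖z‖`
  have hsq : ‖z - x‖ ^ 2 < (Real.sin θ * ‖x‖) ^ 2 := by gcongr
  rw [norm_sub_sq_real, mul_pow, Real.sin_sq, real_inner_comm] at hsq
  have hinner : Real.cos θ * (‖x‖ * ‖z‖) < ⟪x, z⟫ := by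
    nlinarith [sq_nonneg (‖z‖ - Real.cos θ * ‖x‖)]
  have hmono : Real.cos (angle x z) ≤ Real.cos θ :=
    Real.cos_le_cos_of_nonneg_of_le_pi hθ.le (angle_le_pi x z) hle
  rw [← cos_angle_mul_norm_mul_norm] at hinner
  nlinarith [mul_pos hx (norm_pos_iff.mpr hz0)]

lemma quadForm_sub_smul {n : ℕ} (M N : Matrix (Fin n) (Fin n) ℝ) (c : ℝ) (v : Euc n) :
    quadForm (M - c • N) v = quadForm M v - c * quadForm N v := by
  simp only [quadForm, Matrix.sub_apply, Matrix.smul_apply, smul_eq_mul, Finset.mul_sum,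
    ← Finset.sum_sub_distrib]
  exact Finset.sum_congr rfl fun i _ => Finset.sum_congr rfl fun j _ => by ring

lemma quadForm_smul_right {n : ℕ} (M : Matrix (Fin n) (Fin n) ℝ) (c : ℝ) (v : Euc n) :
    quadForm M (c • v) = c ^ 2 * quadForm M v := by
  simp only [quadForm, PiLp.smul_apply, smul_eq_mul, Finset.mul_sum]
  exact Finset.sum_congr rfl fun i _ => Finset.sum_congr rfl fun j _ => by ring

/-- `lamMin M` is a junk `0` when the Rayleigh quotients are unbounded below; `0 < β` rules
that case out. -/
lemma mul_norm_sq_le_quadForm {n : ℕ} {M : Matrix (Fin n) (Fin n) ℝ} {β : ℝ} (hβ : 0 < β)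
    (hM : β ≤ lamMin M) (w : Euc n) : β * ‖w‖ ^ 2 ≤ quadForm M w := by
  have hunit : ∀ v : Euc n, ‖v‖ = 1 → β ≤ quadForm M v := by
    intro v hv
    by_cases hb : BddBelow (Set.range fun u : {u : Euc n // ‖u‖ = 1} => quadForm M u)
    · exact hM.trans (ciInf_le hb ⟨v, hv⟩)
    · rw [lamMin, Real.iInf_of_not_bddBelow hb] at hM
      linarith
  rcases eq_or_ne w 0 with rfl | hw
  · simpa using (quadForm_smul_right M 0 0).ge
  have hwn : 0 < ‖w‖ := norm_pos_iff.mpr hw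
  have hv : ‖‖w‖⁻¹ • w‖ = 1 := by rw [norm_smul_of_nonneg (by positivity), inv_mul_cancel₀ hwn.ne']
  calc β * ‖w‖ ^ 2 ≤ quadForm M (‖w‖⁻¹ • w) * ‖w‖ ^ 2 := by gcongr; exact hunit _ hv
    _ = quadForm M w := by rw [quadForm_smul_right]; field_simp

lemma quadForm_covMat {n : ℕ} (ν : Measure (Euc n)) [IsFiniteMeasure ν]
    (hν : ∀ᵐ a ∂ν, ‖a‖ ≤ 1) (w : Euc n) :
    quadForm (covMat ν) w = ∫ a, ⟪a, w⟫ ^ 2 ∂ν := by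
  have hint : ∀ i j : Fin n, Integrable (fun a : Euc n => a i * a j) ν := by
    refine fun i j => Integrable.mono' (integrable_const 1) (by fun_prop) ?_
    filter_upwards [hν] with a ha
    rw [Real.norm_eq_abs, abs_mul]
    exact mul_le_one₀ ((PiLp.norm_apply_le a i).trans ha) (abs_nonneg _)
      ((PiLp.norm_apply_le a j).trans ha)
  have hexpand : ∀ a : Euc n, ⟪a, w⟫ ^ 2 = ∑ i, ∑ j, w i * w j * (a i * a j) := by
    intro a
    simp only [PiLp.inner_apply, RCLike.inner_apply, conj_trivial, sq, Finset.sum_mul_sum]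
    exact Finset.sum_congr rfl fun i _ => Finset.sum_congr rfl fun j _ => by ring
  simp_rw [hexpand]
  rw [integral_finsetSum _ fun i _ => integrable_finsetSum _ fun j _ => (hint i j).const_mul _]
  refine Finset.sum_congr rfl fun i _ => ?_
  rw [integral_finsetSum _ fun j _ => (hint i j).const_mul _]
  refine Finset.sum_congr rfl fun j _ => ?_
  rw [integral_const_mul, covMat, Matrix.of_apply]
  ring

lemma inner_sq_le_sq_norm {n : ℕ} {a : Euc n} (ha : ‖a‖ ≤ 1) (w : Euc n) :
    ⟪a, w⟫ ^ 2 ≤ ‖w‖ ^ 2 := by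
  rw [← sq_abs]
  gcongr
  exact (abs_real_inner_le_norm a w).trans (mul_le_of_le_one_left (norm_nonneg w) ha)

lemma integrable_inner_sq {n : ℕ} {ν : Measure (Euc n)} [IsFiniteMeasure ν]
    (hν : ∀ᵐ a ∂ν, ‖a‖ ≤ 1) (w : Euc n) : Integrable (fun a => ⟪a, w⟫ ^ 2) ν :=
  Integrable.mono' (integrable_const (‖w‖ ^ 2)) (by fun_prop) (hν.mono fun a ha => by
    rw [Real.norm_eq_abs, abs_of_nonneg (sq_nonneg _)]
    exact inner_sq_le_sq_norm ha w)

lemma measurable_sgn : Measurable sgn :=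
  Measurable.ite measurableSet_Ici measurable_const measurable_const

lemma measurableSet_wedge {n : ℕ} (x z : Euc n) : MeasurableSet (wedge x z) :=
  Metric.isClosed_sphere.measurableSet.inter
    (measurableSet_eq_fun (measurable_sgn.comp (by fun_prop))
      (measurable_sgn.comp (by fun_prop))).compl

lemma integral_sq_sub_inner_sq_add_indicator {n : ℕ} {ν : Measure (Euc n)}
    [IsProbabilityMeasure ν] (hν : ∀ᵐ a ∂ν, ‖a‖ ≤ 1) {W : Set (Euc n)} (hW : MeasurableSet W)
    (w : Euc n) :
    ∫ a, (‖w‖ ^ 2 - ⟪a, w⟫ ^ 2 + W.indicator (fun b => 4 * ⟪b, w⟫ ^ 2) a) ∂ν =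
      ‖w‖ ^ 2 - quadForm (covMat ν - (4 : ℝ) • covMatOn ν W) w := by
  have hint := integrable_inner_sq hν w
  have hsub : Integrable (fun a => ‖w‖ ^ 2 - ⟪a, w⟫ ^ 2) ν := (integrable_const _).sub hint
  rw [integral_add hsub ((hint.const_mul 4).indicator hW),
    integral_sub (integrable_const _) hint, integral_indicator hW, integral_const_mul,
    quadForm_sub_smul, quadForm_covMat ν hν,
    show quadForm (covMatOn ν W) w = quadForm (covMat (ν.restrict W)) w from rfl,
    quadForm_covMat _ (ae_restrict_of_ae hν)]
  simp only [integral_const, probReal_univ, smul_eq_mul, one_mul]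
  ring

lemma lintegral_kacStep_le {n : ℕ} {μ : Measure (Euc n)} [IsProbabilityMeasure μ]
    (hμ : ∀ᵐ a ∂μ, a ∈ Metric.sphere (0 : Euc n) 1) {θ α : ℝ} (hACW : ACW μ θ α)
    (hθ : 0 < θ) (hθ' : θ < Real.pi / 2) (hq : 0 < α / n) {x z : Euc n}
    (hz : z ∈ Metric.ball x (Real.sin θ * ‖x‖)) :
    ∫⁻ a, ENNReal.ofReal (‖kacStep x a z - x‖ ^ 2) ∂μ ≤
      ENNReal.ofReal (1 - α / n) * ENNReal.ofReal (‖z - x‖ ^ 2) := by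
  rw [mem_ball_iff_norm] at hz
  obtain ⟨hz0, hangle⟩ := angle_lt_of_norm_sub_lt hθ hθ' hz
  have hx : x ≠ 0 := by
    rintro rfl
    simp only [norm_zero, mul_zero] at hz
    exact (norm_nonneg _).not_gt hz
  have hunit : ∀ᵐ a ∂μ, ‖a‖ = 1 := hμ.mono fun a ha => by simpa using ha
  have hball : ∀ᵐ a ∂μ, ‖a‖ ≤ 1 := hunit.mono fun a ha => ha.le
  set w := z - x
  set F := fun a => ‖w‖ ^ 2 - ⟪a, w⟫ ^ 2 + (wedge x z).indicator (fun b => 4 * ⟪b, w⟫ ^ 2) a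
  have hint := integrable_inner_sq hball w
  have hFint : Integrable F μ :=
    ((integrable_const _).sub hint).add ((hint.const_mul 4).indicator (measurableSet_wedge x z))
  have hFnonneg : 0 ≤ᵐ[μ] F := hball.mono fun a ha =>
    add_nonneg (sub_nonneg.mpr (inner_sq_le_sq_norm ha w))
      (Set.indicator_nonneg (fun b _ => by positivity) a)
  have hquad := mul_norm_sq_le_quadForm hq (hACW x z hx hz0 hangle) w
  calc ∫⁻ a, ENNReal.ofReal (‖kacStep x a z - x‖ ^ 2) ∂μ
      ≤ ∫⁻ a, ENNReal.ofReal (F a) ∂μ :=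
        lintegral_mono_ae (hunit.mono fun a ha =>
          ENNReal.ofReal_le_ofReal (norm_kacStep_sub_sq_le x a z ha))
    _ = ENNReal.ofReal (∫ a, F a ∂μ) := (ofReal_integral_eq_lintegral_ofReal hFint hFnonneg).symm
    _ ≤ ENNReal.ofReal ((1 - α / n) * ‖w‖ ^ 2) := by
        rw [integral_sq_sub_inner_sq_add_indicator hball (measurableSet_wedge x z)]
        exact ENNReal.ofReal_le_ofReal (by linarith)
    _ = ENNReal.ofReal (1 - α / n) * ENNReal.ofReal (‖w‖ ^ 2) := ENNReal.ofReal_mul' (sq_nonneg _)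

section DrivenChain

variable {S E : Type*}

/-- The inputs are indexed by `Fin k`, so that the state after `k` steps is visibly a function
of the first `k` inputs alone. -/
def drivenChain (f : ℕ → S → E → S) (z₀ : S) : (k : ℕ) → (Fin k → E) → S
  | 0, _ => z₀
  | k + 1, u => f k (drivenChain f z₀ k (Fin.init u)) (u (Fin.last k))

lemma drivenChain_succ (f : ℕ → S → E → S) (z₀ : S) (a : ℕ → E) (k : ℕ) :
    drivenChain f z₀ (k + 1) (fun j => a j) = f k (drivenChain f z₀ k fun j => a j) (a k) :=
  rfl

open Classical in
noncomputable def stopAt (R : ℕ → Set S) (g : S → E → S) (j : ℕ) (z : S) (a : E) : S :=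
  if z ∈ R j then g z a else z

lemma drivenChain_stopAt_of_forall_mem {R : ℕ → Set S} {g : S → E → S} {X : ℕ → S}
    {a : ℕ → E} (hX : ∀ j, X (j + 1) = g (X j) (a j)) {m : ℕ} (hm : ∀ j < m, X j ∈ R j) :
    drivenChain (stopAt R g) (X 0) m (fun j => a j) = X m := by
  induction m with
  | zero => rfl
  | succ m ih =>
    rw [drivenChain_succ, ih fun j hj => hm j (hj.trans m.lt_succ_self), stopAt,
      if_pos (hm m m.lt_succ_self), hX]

lemma drivenChain_stopAt_of_not_mem {R : ℕ → Set S} (hR : Antitone R) {g : S → E → S}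
    {z₀ : S} {a : ℕ → E} {m : ℕ} (hm : drivenChain (stopAt R g) z₀ m (fun j => a j) ∉ R m)
    {k : ℕ} (hk : m ≤ k) :
    drivenChain (stopAt R g) z₀ k (fun j => a j) = drivenChain (stopAt R g) z₀ m fun j => a j := by
  induction k, hk using Nat.le_induction with
  | base => rfl
  | succ k hmk ih => rw [drivenChain_succ, ih, stopAt, if_neg fun h => hm (hR hmk h)]

lemma forall_mem_or_eventually_drivenChain_stopAt_eq {R : ℕ → Set S} (hR : Antitone R)
    {g : S → E → S} {X : ℕ → S} {a : ℕ → E} (hX : ∀ j, X (j + 1) = g (X j) (a j)) :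
    (∀ k, X k ∈ R k) ∨ ∃ m, X m ∉ R m ∧
      ∀ᶠ k in atTop, drivenChain (stopAt R g) (X 0) k (fun j => a j) = X m := by
  classical
  refine or_iff_not_imp_left.mpr fun h => ?_
  push Not at h
  have hfirst : drivenChain (stopAt R g) (X 0) (Nat.find h) (fun j => a j) = X (Nat.find h) :=
    drivenChain_stopAt_of_forall_mem hX fun j hj => not_not.mp (Nat.find_min h hj)
  refine ⟨Nat.find h, Nat.find_spec h, eventually_atTop.mpr ⟨Nat.find h, fun k hk => ?_⟩⟩
  rw [drivenChain_stopAt_of_not_mem hR (hfirst ▸ Nat.find_spec h) hk, hfirst]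

variable [MeasurableSpace S] [MeasurableSpace E]

lemma measurable_drivenChain {f : ℕ → S → E → S}
    (hf : ∀ k, Measurable (Function.uncurry (f k))) (z₀ : S) (k : ℕ) :
    Measurable (drivenChain f z₀ k) := by
  induction k with
  | zero => exact measurable_const
  | succ k ih =>
    exact (hf k).comp ((ih.comp (measurable_pi_lambda _ fun j => measurable_pi_apply _)).prodMk
      (measurable_pi_apply _))

lemma measurable_stopAt {R : ℕ → Set S} (hR : ∀ j, MeasurableSet (R j)) {g : S → E → S}
    (hg : Measurable (Function.uncurry g)) (j : ℕ) :
    Measurable (Function.uncurry (stopAt R g j)) :=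
  Measurable.ite (measurable_fst (hR j)) hg measurable_fst

omit [MeasurableSpace S] in
lemma lintegral_stopAt_le {μ : Measure E} [IsProbabilityMeasure μ] {R : ℕ → Set S}
    {g : S → E → S} {V : S → ℝ≥0∞} {c : ℝ≥0∞} {j : ℕ} {z : S}
    (hin : z ∈ R j → ∫⁻ a, V (g z a) ∂μ ≤ c * V z) (hout : z ∉ R j → V z ≤ c * V z) :
    ∫⁻ a, V (stopAt R g j z a) ∂μ ≤ c * V z := by
  by_cases hz : z ∈ R j
  · simpa only [stopAt, if_pos hz] using hin hz
  · simpa only [stopAt, if_neg hz, lintegral_const, measure_univ, mul_one] using hout hz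

variable {Ω : Type*} [MeasurableSpace Ω] {P : Measure Ω} [IsProbabilityMeasure P]
  {μ : Measure E} {A : ℕ → Ω → E}

lemma lintegral_prefix_next_eq (hmeas : ∀ i, Measurable (A i)) (hindep : iIndepFun A P)
    {k : ℕ} (hdist : P.map (A k) = μ) {F : (Fin k → E) → E → ℝ≥0∞}
    (hF : Measurable (Function.uncurry F)) :
    ∫⁻ ω, F (fun j : Fin k => A j ω) (A k ω) ∂P =
      ∫⁻ u, ∫⁻ a, F u a ∂μ ∂(P.map fun ω (j : Fin k) => A j ω) := by
  have : IsFiniteMeasure μ := hdist ▸ inferInstance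
  have hprefix : Measurable fun ω (j : Fin k) => A j ω := measurable_pi_lambda _ fun j => hmeas j
  have hindep' : IndepFun (fun ω (j : Fin k) => A j ω) (A k) P := by
    have hdisj : Disjoint (Finset.range k) {k} := by simp
    exact (hindep.indepFun_finset _ _ hdisj hmeas).comp
      (φ := fun v (j : Fin k) => v ⟨j, Finset.mem_range.mpr j.isLt⟩)
      (ψ := fun v => v ⟨k, Finset.mem_singleton_self k⟩)
      (by fun_prop) (measurable_pi_apply (X := fun _ : ({k} : Finset ℕ) => E) _)
  have hprod : P.map (fun ω => ((fun j : Fin k => A j ω), A k ω)) =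
      (P.map fun ω (j : Fin k) => A j ω).prod μ := by
    rw [← hdist]
    exact (indepFun_iff_map_prod_eq_prod_map_map hprefix.aemeasurable
      (hmeas k).aemeasurable).mp hindep'
  calc ∫⁻ ω, F (fun j : Fin k => A j ω) (A k ω) ∂P
      = ∫⁻ p, Function.uncurry F p ∂(P.map fun ω => ((fun j : Fin k => A j ω), A k ω)) :=
        (lintegral_map hF (hprefix.prodMk (hmeas k))).symm
    _ = ∫⁻ u, ∫⁻ a, F u a ∂μ ∂(P.map fun ω (j : Fin k) => A j ω) := by
        rw [hprod, lintegral_prod _ hF.aemeasurable]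
        rfl

lemma lintegral_drivenChain_le (hmeas : ∀ i, Measurable (A i)) (hindep : iIndepFun A P)
    (hdist : ∀ i, P.map (A i) = μ) {f : ℕ → S → E → S}
    (hf : ∀ k, Measurable (Function.uncurry (f k))) (z₀ : S) {V : S → ℝ≥0∞} (hV : Measurable V)
    {c : ℕ → ℝ≥0∞} (hstep : ∀ j z, ∫⁻ a, V (f j z a) ∂μ ≤ c j * V z) (k : ℕ) :
    ∫⁻ ω, V (drivenChain f z₀ k fun j => A j ω) ∂P ≤ (∏ j ∈ Finset.range k, c j) * V z₀ := by
  induction k with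
  | zero => simp [drivenChain]
  | succ k ih =>
    have hZ := measurable_drivenChain hf z₀ k
    have hVZ : Measurable fun u => V (drivenChain f z₀ k u) := hV.comp hZ
    have hprefix : Measurable fun ω (j : Fin k) => A j ω :=
      measurable_pi_lambda _ fun j => hmeas j
    calc ∫⁻ ω, V (drivenChain f z₀ (k + 1) fun j => A j ω) ∂P
        = ∫⁻ u, ∫⁻ a, V (f k (drivenChain f z₀ k u) a) ∂μ ∂(P.map fun ω (j : Fin k) => A j ω) :=
          lintegral_prefix_next_eq hmeas hindep (hdist k)
            (F := fun u a => V (f k (drivenChain f z₀ k u) a))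
            (hV.comp ((hf k).comp (hZ.prodMap measurable_id)))
      _ ≤ ∫⁻ u, c k * V (drivenChain f z₀ k u) ∂(P.map fun ω (j : Fin k) => A j ω) :=
          lintegral_mono fun u => hstep k _
      _ = c k * ∫⁻ ω, V (drivenChain f z₀ k fun j => A j ω) ∂P := by
          rw [lintegral_const_mul _ hVZ, lintegral_map hVZ hprefix]
      _ ≤ c k * ((∏ j ∈ Finset.range k, c j) * V z₀) := by gcongr
      _ = (∏ j ∈ Finset.range (k + 1), c j) * V z₀ := by rw [Finset.prod_range_succ]; ring

omit [IsProbabilityMeasure P] in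
lemma measure_setOf_eventually_mem_le {B : ℕ → Set Ω} {c : ℝ≥0∞}
    (h : ∀ᶠ k in atTop, P (B k) ≤ c) : P {ω | ∀ᶠ k in atTop, ω ∈ B k} ≤ c := by
  obtain ⟨K, hK⟩ := eventually_atTop.mp h
  have hset : {ω | ∀ᶠ k in atTop, ω ∈ B k} = ⋃ m, ⋂ k ≥ m, B k := by
    ext ω
    simp [eventually_atTop]
  have hmono : Monotone fun m => ⋂ k ≥ m, B k :=
    fun m m' hm => Set.biInter_mono (fun k hk => hm.trans hk) fun _ _ => le_rfl
  rw [hset, hmono.measure_iUnion]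
  exact iSup_le fun m =>
    (measure_mono (Set.biInter_subset_of_mem (le_max_left m K))).trans (hK _ (le_max_right m K))

lemma measure_eventually_ge_drivenChain_le (hmeas : ∀ i, Measurable (A i))
    (hindep : iIndepFun A P) (hdist : ∀ i, P.map (A i) = μ) {f : ℕ → S → E → S}
    (hf : ∀ k, Measurable (Function.uncurry (f k))) (z₀ : S) {V : S → ℝ≥0∞} (hV : Measurable V)
    {c : ℕ → ℝ≥0∞} (hstep : ∀ j z, ∫⁻ a, V (f j z a) ∂μ ≤ c j * V z) {t b : ℝ≥0∞}
    (ht : t ≠ 0) (ht' : t ≠ ⊤) (hb : ∀ᶠ k in atTop, (∏ j ∈ Finset.range k, c j) * V z₀ ≤ b) :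
    P {ω | ∀ᶠ k in atTop, t ≤ V (drivenChain f z₀ k fun j => A j ω)} ≤ b / t := by
  refine measure_setOf_eventually_mem_le (hb.mono fun k hk => ?_)
  have hmeasV : Measurable fun ω => V (drivenChain f z₀ k fun j => A j ω) :=
    hV.comp ((measurable_drivenChain hf z₀ k).comp (measurable_pi_lambda _ fun j => hmeas j))
  refine (meas_ge_le_lintegral_div hmeasV.aemeasurable ht ht').trans
    (ENNReal.div_le_div_right ?_ t)
  exact (lintegral_drivenChain_le hmeas hindep hdist hf z₀ hV hstep k).trans hk

end DrivenChain

def kacRegion {n : ℕ} (x : Euc n) (r s : ℝ) (K j : ℕ) : Set (Euc n) :=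
  if j < K then Metric.ball x r else Metric.ball x r ∩ {z | ‖z - x‖ ^ 2 ≤ s}

lemma kacRegion_subset_ball {n : ℕ} (x : Euc n) (r s : ℝ) (K j : ℕ) :
    kacRegion x r s K j ⊆ Metric.ball x r := by
  unfold kacRegion
  split_ifs
  exacts [subset_rfl, Set.inter_subset_left]

lemma antitone_kacRegion {n : ℕ} (x : Euc n) (r s : ℝ) (K : ℕ) : Antitone (kacRegion x r s K) := by
  intro i j hij
  unfold kacRegion
  split_ifs with hj hi hi
  exacts [subset_rfl, absurd (hij.trans_lt hj) hi, Set.inter_subset_left, subset_rfl]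

lemma measurableSet_kacRegion {n : ℕ} (x : Euc n) (r s : ℝ) (K j : ℕ) :
    MeasurableSet (kacRegion x r s K j) := by
  unfold kacRegion
  split_ifs
  exacts [measurableSet_ball,
    measurableSet_ball.inter (measurableSet_le (by fun_prop) (by fun_prop))]

lemma measurable_kacStep {n : ℕ} (x : Euc n) :
    Measurable (Function.uncurry fun (z a : Euc n) => kacStep x a z) := by
  unfold kacStep
  exact measurable_fst.add
    ((((measurable_sgn.comp (by fun_prop)).mul (by fun_prop)).sub (by fun_prop)).smul
      measurable_snd)

noncomputable def stoppedKac {n : ℕ} (x x0 : Euc n) (r s : ℝ) (K : ℕ) :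
    (k : ℕ) → (Fin k → Euc n) → Euc n :=
  drivenChain (stopAt (kacRegion x r s K) fun z a => kacStep x a z) x0

lemma kacIter_le_or_stoppedKac_far_or_large {n : ℕ} (x x0 : Euc n) (a : ℕ → Euc n) (r s : ℝ)
    (K : ℕ) :
    (∀ k, K ≤ k → ‖kacIter x a x0 k - x‖ ^ 2 ≤ s) ∨
      (∀ᶠ k in atTop, r ≤ dist (stoppedKac x x0 r s K k fun j => a j) x) ∨
      ∀ᶠ k in atTop, stoppedKac x x0 r s K k (fun j => a j) ∈ Metric.ball x r ∧
        s < ‖stoppedKac x x0 r s K k (fun j => a j) - x‖ ^ 2 := by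
  rcases forall_mem_or_eventually_drivenChain_stopAt_eq (antitone_kacRegion x r s K)
    (g := fun z b => kacStep x b z) (X := kacIter x a x0) (fun j => rfl) with
    hall | ⟨m, hm, hstop⟩
  · refine Or.inl fun k hk => ?_
    have := hall k
    rw [kacRegion, if_neg (not_lt.mpr hk)] at this
    exact this.2
  by_cases hball : kacIter x a x0 m ∈ Metric.ball x r
  · have hmK : K ≤ m := not_lt.mp fun h => hm (by rwa [kacRegion, if_pos h])
    rw [kacRegion, if_neg (not_lt.mpr hmK)] at hm
    have hs : s < ‖kacIter x a x0 m - x‖ ^ 2 := not_le.mp fun h => hm ⟨hball, h⟩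
    exact Or.inr (Or.inr (hstop.mono fun k (hk : stoppedKac x x0 r s K k _ = _) => by
      rw [hk]
      exact ⟨hball, hs⟩))
  · exact Or.inr (Or.inl (hstop.mono fun k (hk : stoppedKac x x0 r s K k _ = _) => by
      rw [hk]
      exact not_lt.mp hball))

lemma measure_eventually_stoppedKac_far_le {n : ℕ} {μ : Measure (Euc n)}
    [IsProbabilityMeasure μ] (hμ : ∀ᵐ a ∂μ, a ∈ Metric.sphere (0 : Euc n) 1) {θ α : ℝ}
    (hACW : ACW μ θ α) (hθ : 0 < θ) (hθ' : θ < Real.pi / 2) (hq : 0 < α / n)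
    {Ω : Type*} [MeasurableSpace Ω] {P : Measure Ω} [IsProbabilityMeasure P]
    {A : ℕ → Ω → Euc n} (hmeas : ∀ i, Measurable (A i)) (hindep : iIndepFun A P)
    (hdist : ∀ i, P.map (A i) = μ) {x : Euc n} (hr : 0 < Real.sin θ * ‖x‖) (x0 : Euc n)
    (s : ℝ) (K : ℕ) :
    P {ω | ∀ᶠ k in atTop, Real.sin θ * ‖x‖ ≤
        dist (stoppedKac x x0 (Real.sin θ * ‖x‖) s K k fun j => A j ω) x} ≤
      ENNReal.ofReal (‖x0 - x‖ ^ 2) / ENNReal.ofReal ((Real.sin θ * ‖x‖) ^ 2) := by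
  set r := Real.sin θ * ‖x‖
  set V : Euc n → ℝ≥0∞ := fun z => ENNReal.ofReal (‖z - x‖ ^ 2)
  have hstep : ∀ j z, ∫⁻ a, V (stopAt (kacRegion x r s K) (fun z a => kacStep x a z) j z a) ∂μ ≤
      1 * V z := by
    refine fun j z => lintegral_stopAt_le (fun hz => ?_) fun _ => (one_mul _).ge
    refine (lintegral_kacStep_le hμ hACW hθ hθ' hq (kacRegion_subset_ball x r s K j hz)).trans ?_
    gcongr
    exact ENNReal.ofReal_le_one.mpr (by linarith)
  refine (measure_mono fun ω hω => hω.mono fun k hk => ?_).trans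
    (measure_eventually_ge_drivenChain_le hmeas hindep hdist
      (fun j => measurable_stopAt (measurableSet_kacRegion x r s K) (measurable_kacStep x) j) x0
      (by fun_prop) hstep (t := ENNReal.ofReal (r ^ 2)) (by positivity) ENNReal.ofReal_ne_top
      (Eventually.of_forall fun k => by simp [V]))
  exact ENNReal.ofReal_le_ofReal (pow_le_pow_left₀ hr.le (dist_eq_norm _ x ▸ hk) 2)

lemma prod_range_ite_lt_of_le {M : Type*} [CommMonoid M] (b : M) {K k : ℕ} (hk : K ≤ k) :
    ∏ j ∈ Finset.range k, (if j < K then b else 1) = b ^ K := by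
  rw [← Finset.prod_range_mul_prod_Ico _ hk,
    Finset.prod_congr rfl fun j hj => if_pos (Finset.mem_range.mp hj),
    Finset.prod_eq_one fun j hj => if_neg (not_lt.mpr (Finset.mem_Ico.mp hj).1)]
  simp

lemma measure_eventually_stoppedKac_large_le {n : ℕ} {μ : Measure (Euc n)}
    [IsProbabilityMeasure μ] (hμ : ∀ᵐ a ∂μ, a ∈ Metric.sphere (0 : Euc n) 1) {θ α : ℝ}
    (hACW : ACW μ θ α) (hθ : 0 < θ) (hθ' : θ < Real.pi / 2) (hq : 0 < α / n)
    {Ω : Type*} [MeasurableSpace Ω] {P : Measure Ω} [IsProbabilityMeasure P]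
    {A : ℕ → Ω → Euc n} (hmeas : ∀ i, Measurable (A i)) (hindep : iIndepFun A P)
    (hdist : ∀ i, P.map (A i) = μ) (x x0 : Euc n) (s : ℝ) (hs : 0 < s) (K : ℕ) :
    P {ω | ∀ᶠ k in atTop,
        stoppedKac x x0 (Real.sin θ * ‖x‖) s K k (fun j => A j ω) ∈
          Metric.ball x (Real.sin θ * ‖x‖) ∧
        s < ‖stoppedKac x x0 (Real.sin θ * ‖x‖) s K k (fun j => A j ω) - x‖ ^ 2} ≤
      ENNReal.ofReal (1 - α / n) ^ K * ENNReal.ofReal (‖x0 - x‖ ^ 2) / ENNReal.ofReal s := by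
  set r := Real.sin θ * ‖x‖
  set V : Euc n → ℝ≥0∞ := (Metric.ball x r).indicator fun z => ENNReal.ofReal (‖z - x‖ ^ 2)
  set c : ℕ → ℝ≥0∞ := fun j => if j < K then ENNReal.ofReal (1 - α / n) else 1
  have hstep : ∀ j z, ∫⁻ a, V (stopAt (kacRegion x r s K) (fun z a => kacStep x a z) j z a) ∂μ ≤
      c j * V z := by
    intro j z
    refine lintegral_stopAt_le (fun hz => ?_) fun hz => ?_
    · have hball := kacRegion_subset_ball x r s K j hz
      calc ∫⁻ a, V (kacStep x a z) ∂μ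
          ≤ ∫⁻ a, ENNReal.ofReal (‖kacStep x a z - x‖ ^ 2) ∂μ :=
            lintegral_mono fun a => Set.indicator_le_self _ _ _
        _ ≤ ENNReal.ofReal (1 - α / n) * V z := by
            rw [show V z = _ from Set.indicator_of_mem hball _]
            exact lintegral_kacStep_le hμ hACW hθ hθ' hq hball
        _ ≤ c j * V z := by
            gcongr
            simp only [c]
            split_ifs
            exacts [le_rfl, ENNReal.ofReal_le_one.mpr (by linarith)]
    · by_cases hj : j < K
      · rw [kacRegion, if_pos hj] at hz
        simp [V, Set.indicator_of_notMem hz]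
      · simp [c, if_neg hj]
  have hV : Measurable V :=
    (by fun_prop : Measurable fun z => ENNReal.ofReal (‖z - x‖ ^ 2)).indicator measurableSet_ball
  have hdecay : ∀ᶠ k in atTop, (∏ j ∈ Finset.range k, c j) * V x0 ≤
      ENNReal.ofReal (1 - α / n) ^ K * ENNReal.ofReal (‖x0 - x‖ ^ 2) := by
    refine eventually_atTop.mpr ⟨K, fun k hk => ?_⟩
    rw [prod_range_ite_lt_of_le _ hk]
    gcongr
    exact Set.indicator_le_self _ _ _
  refine (measure_mono fun ω hω => hω.mono fun k hk => ?_).trans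
    (measure_eventually_ge_drivenChain_le hmeas hindep hdist
      (fun j => measurable_stopAt (measurableSet_kacRegion x r s K) (measurable_kacStep x) j) x0
      hV hstep (t := ENNReal.ofReal s) (by positivity) ENNReal.ofReal_ne_top hdecay)
  exact (ENNReal.ofReal_le_ofReal hk.2.le).trans_eq
    (Set.indicator_of_mem hk.1 fun z => ENNReal.ofReal (‖z - x‖ ^ 2)).symm

lemma ofReal_one_sub_pow_ceil_le {q : ℝ} (hq : 0 < q) (L : ℝ) :
    ENNReal.ofReal (1 - q) ^ ⌈L / q⌉₊ ≤ ENNReal.ofReal (Real.exp (-L)) :=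
  calc ENNReal.ofReal (1 - q) ^ ⌈L / q⌉₊ ≤ ENNReal.ofReal (Real.exp (-q)) ^ ⌈L / q⌉₊ := by
        gcongr
        linarith [Real.add_one_le_exp (-q)]
    _ = ENNReal.ofReal (Real.exp (-(q * ⌈L / q⌉₊))) := by
        rw [← ENNReal.ofReal_pow (Real.exp_pos _).le, ← Real.exp_nat_mul]
        ring_nf
    _ ≤ ENNReal.ofReal (Real.exp (-L)) := by
        gcongr
        exact (div_le_iff₀' hq).mp (Nat.le_ceil _)

lemma ofReal_one_sub_sub_le_measure {Ω : Type*} [MeasurableSpace Ω] {P : Measure Ω}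
    [IsProbabilityMeasure P] {T E₁ E₂ : Set Ω} {δ₁ δ₂ : ℝ} (hδ₁ : 0 ≤ δ₁) (hδ₂ : 0 ≤ δ₂)
    (hcover : ∀ ω, ω ∈ T ∨ ω ∈ E₁ ∨ ω ∈ E₂) (h₁ : P E₁ ≤ ENNReal.ofReal δ₁)
    (h₂ : P E₂ ≤ ENNReal.ofReal δ₂) :
    ENNReal.ofReal (1 - δ₁ - δ₂) ≤ P T := by
  have hunion : 1 ≤ P T + ENNReal.ofReal (δ₁ + δ₂) :=
    calc 1 = P Set.univ := measure_univ.symm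
      _ ≤ P (T ∪ (E₁ ∪ E₂)) := measure_mono fun ω _ => hcover ω
      _ ≤ P T + (P E₁ + P E₂) :=
        (measure_union_le _ _).trans (by gcongr; exact measure_union_le _ _)
      _ ≤ P T + ENNReal.ofReal (δ₁ + δ₂) := by rw [ENNReal.ofReal_add hδ₁ hδ₂]; gcongr
  rw [sub_sub, ENNReal.ofReal_sub _ (add_nonneg hδ₁ hδ₂), ENNReal.ofReal_one]
  exact tsub_le_iff_right.mpr hunion

theorem linear_convergence_ACW_high_probability_general {n : ℕ} (μ : Measure (Euc n))
    [IsProbabilityMeasure μ]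
    (hsupp : ∀ᵐ a ∂μ, a ∈ Metric.sphere (0 : Euc n) 1)
    (θ α : ℝ) (hα : 0 < α) (hθ : 0 < θ) (hθ' : θ < Real.pi / 2) (hACW : ACW μ θ α)
    (x : Euc n) (hx : x ≠ 0) (ε δ₁ δ₂ : ℝ) (hε : 0 < ε) (hδ₁ : 0 < δ₁)
    (hδ₂ : 0 < δ₂)
    {Ω : Type} [MeasurableSpace Ω] (P : Measure Ω) [IsProbabilityMeasure P]
    (A : ℕ → Ω → Euc n) (hmeas : ∀ i, Measurable (A i))
    (hindep : iIndepFun A P)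
    (hdist : ∀ i, Measure.map (A i) P = μ)
    (x0 : Euc n) (hx0 : ‖x0 - x‖ ≤ Real.sqrt δ₁ * Real.sin θ * ‖x‖) :
    P {ω | ∀ k : ℕ,
        (k : ℝ) ≥ (Real.log (2 / ε) + Real.log (1 / δ₂)) * n / α →
        ‖kacIter x (fun i => A i ω) x0 k - x‖ ^ 2 ≤ ε * ‖x0 - x‖ ^ 2} ≥
      ENNReal.ofReal (1 - δ₁ - δ₂) := by
  rcases eq_or_ne x0 x with rfl | hx0x
  · exact (ENNReal.ofReal_le_one.mpr (by linarith)).trans_eq (by simp [kacIter_self])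
  have hn : 0 < n := Nat.pos_of_ne_zero fun h => hx (by subst h; exact Subsingleton.elim _ _)
  have hq : 0 < α / n := by positivity
  have hr : 0 < Real.sin θ * ‖x‖ :=
    mul_pos (Real.sin_pos_of_pos_of_lt_pi hθ (by linarith [Real.pi_pos])) (norm_pos_iff.mpr hx)
  have hY : 0 < ‖x0 - x‖ ^ 2 := by positivity [sub_ne_zero.mpr hx0x]
  have hY₁ : ‖x0 - x‖ ^ 2 ≤ δ₁ * (Real.sin θ * ‖x‖) ^ 2 := by
    simpa [mul_pow, Real.sq_sqrt hδ₁.le, mul_assoc] using pow_le_pow_left₀ (norm_nonneg _) hx0 2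
  set L := Real.log (2 / ε) + Real.log (1 / δ₂)
  have hexp : Real.exp (-L) = ε * δ₂ / 2 := by
    rw [Real.exp_neg, Real.exp_add, Real.exp_log (by positivity), Real.exp_log (by positivity)]
    field_simp
  have hK := (ofReal_one_sub_pow_ceil_le hq L).trans_eq (congrArg ENNReal.ofReal hexp)
  refine ofReal_one_sub_sub_le_measure hδ₁.le hδ₂.le (fun ω => ?_)
    ((measure_eventually_stoppedKac_far_le hsupp hACW hθ hθ' hq hmeas hindep hdist hr x0
      (ε * ‖x0 - x‖ ^ 2) ⌈L / (α / n)⌉₊).trans (ENNReal.div_le_of_le_mul ?_))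
    ((measure_eventually_stoppedKac_large_le hsupp hACW hθ hθ' hq hmeas hindep hdist x x0
      (ε * ‖x0 - x‖ ^ 2) (by positivity) ⌈L / (α / n)⌉₊).trans (ENNReal.div_le_of_le_mul ?_))
  · rcases kacIter_le_or_stoppedKac_far_or_large x x0 (fun i => A i ω) (Real.sin θ * ‖x‖)
      (ε * ‖x0 - x‖ ^ 2) ⌈L / (α / n)⌉₊ with hclose | hbad
    · exact Or.inl fun k hk => hclose k (Nat.ceil_le.mpr (by rwa [div_div_eq_mul_div]))
    · exact Or.inr hbad
  · rw [← ENNReal.ofReal_mul hδ₁.le]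
    exact ENNReal.ofReal_le_ofReal hY₁
  · calc ENNReal.ofReal (1 - α / n) ^ ⌈L / (α / n)⌉₊ * ENNReal.ofReal (‖x0 - x‖ ^ 2)
        ≤ ENNReal.ofReal (ε * δ₂ / 2) * ENNReal.ofReal (‖x0 - x‖ ^ 2) := by gcongr
      _ ≤ ENNReal.ofReal δ₂ * ENNReal.ofReal (ε * ‖x0 - x‖ ^ 2) := by
        rw [← ENNReal.ofReal_mul (by positivity), ← ENNReal.ofReal_mul hδ₂.le]
        exact ENNReal.ofReal_le_ofReal (by nlinarith [mul_pos (mul_pos hε hδ₂) hY])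

/-- **Corollary (Linear convergence for an ACW measure, high probability).**
Fix `ε > 0`, `0 < δ₁ ≤ 1/2`, `0 < δ₂ ≤ 1`. Suppose `μ` is an `ACW(θ, α)` probability
measure on `S^{n−1}`, `x ≠ 0`, and `‖x₀ − x‖ ≤ √δ₁ sin(θ) ‖x‖`. Then with
probability at least `1 − δ₁ − δ₂`: whenever `k ≥ (log(2/ε) + log(1/δ₂)) n / α`,
the generalized randomized Kaczmarz iterate satisfies `‖X_k − x‖² ≤ ε‖x₀ − x‖²`. -/
theorem linear_convergence_ACW_high_probability {n : ℕ} (μ : Measure (Euc n))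
    [IsProbabilityMeasure μ]
    (hsupp : ∀ᵐ a ∂μ, a ∈ Metric.sphere (0 : Euc n) 1)
    (θ α : ℝ) (hα : 0 < α) (hθ : 0 < θ) (hθ' : θ < Real.pi / 2) (hACW : ACW μ θ α)
    (x : Euc n) (hx : x ≠ 0) (ε δ₁ δ₂ : ℝ) (hε : 0 < ε) (hδ₁ : 0 < δ₁)
    (hδ₁' : δ₁ ≤ 1 / 2) (hδ₂ : 0 < δ₂) (hδ₂' : δ₂ ≤ 1)
    {Ω : Type} [MeasurableSpace Ω] (P : Measure Ω) [IsProbabilityMeasure P]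
    (A : ℕ → Ω → Euc n) (hmeas : ∀ i, Measurable (A i))
    (hindep : iIndepFun A P)
    (hdist : ∀ i, Measure.map (A i) P = μ)
    (x0 : Euc n) (hx0 : ‖x0 - x‖ ≤ Real.sqrt δ₁ * Real.sin θ * ‖x‖) :
    P {ω | ∀ k : ℕ,
        (k : ℝ) ≥ (Real.log (2 / ε) + Real.log (1 / δ₂)) * n / α →
        ‖kacIter x (fun i => A i ω) x0 k - x‖ ^ 2 ≤ ε * ‖x0 - x‖ ^ 2} ≥
      ENNReal.ofReal (1 - δ₁ - δ₂) :=
  linear_convergence_ACW_high_probability_general μ hsupp θ α hα hθ hθ' hACW x hx ε δ₁ δ₂ hε hδ₁ hδ₂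
    P A hmeas hindep hdist x0 hx0
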